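/- arXiv:2605.26411 — 4 statements merged into one kernel-verified Lean document; each statement's English description precedes it below -/
import Mathlib

section
/- Let N ≥ 2 be an integer and let A be the (N−1)×(N−1) matrix with A_{i,j} = 1/2 if |i−j| = 1 and 0 otherwise. Then for every integer k ≥ 0, the (1, N−1) entry of A^k equals (2/N)·∑_{ℓ=1}^{N−1} (−1)^{ℓ+1} · cos^k(ℓπ/N) · sin²(ℓπ/N). -/
/-!
`tridiagA N` is the transition matrix of the simple random walk on `{1, …, N-1}` killed at `0`
and `N`. Its eigenvectors are the discrete sine modes `x ↦ sin (x ℓ π / N)`, `1 ≤ ℓ ≤ N - 1`,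
with eigenvalues `cos (ℓ π / N)`, so
`(A^k)_{x,y} = (2/N) ∑_ℓ cos^k (ℓπ/N) sin (xℓπ/N) sin (yℓπ/N)`.
This is proved by induction on `k`: for `k = 0` it is the orthogonality of the sine modes, which
reduces to the closed form of `∑_ℓ cos (mℓπ/N)`; the induction step is
`sin ((x-1)θ) + sin ((x+1)θ) = 2 cos θ sin (xθ)`, the boundary rows being taken care of by the
vanishing of the modes at `x = 0` and `x = N`. The claim is the entry `x = 1`, `y = N - 1`,
where `sin ((N-1)ℓπ/N) = (-1)^(ℓ+1) sin (ℓπ/N)`.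
-/

open Real Finset

/-- The `(N−1)×(N−1)` matrix (rows and columns indexed by `{1,…,N−1}`, realized as
`Fin (N-1)` via `m ↦ m+1`) with entries `1/2` if `|i−j| = 1` and `0` otherwise. -/
noncomputable def tridiagA (N : ℕ) : Matrix (Fin (N - 1)) (Fin (N - 1)) ℝ :=
  fun i j => if (i : ℕ) + 1 = (j : ℕ) ∨ (j : ℕ) + 1 = (i : ℕ) then 1 / 2 else 0

open scoped Matrix

theorem sum_range_cos_int_mul {N : ℕ} (hN : N ≠ 0) {m : ℤ} (hm : ¬ 2 * (N : ℤ) ∣ m) :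
    ∑ ℓ ∈ range N, cos (m * (ℓ * π / N)) = sin (m * π / 2) ^ 2 := by
  have hN' : (N : ℝ) ≠ 0 := by exact_mod_cast hN
  have hhalf : sin (m * π / N / 2) ≠ 0 := by
    rw [Ne, sin_eq_zero_iff]
    rintro ⟨n, hn⟩
    refine hm ⟨n, ?_⟩
    field_simp at hn
    exact_mod_cast (by linear_combination -hn : (m : ℝ) = 2 * N * n)
  have hsc : sin (m * π / 2) * cos (m * π / 2) = 0 := by
    have h := sin_two_mul (m * π / 2)
    rw [show 2 * (m * π / 2) = m * π by ring, sin_int_mul_pi] at h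
    linarith
  have key := sin_mul_sum_cos N (m * π / N) 0
  rw [show (N : ℝ) * (m * π / N) / 2 = m * π / 2 by field_simp,
    show ((N : ℝ) - 1) * (m * π / N) / 2 + 0 = m * π / 2 - m * π / N / 2 by field_simp; ring,
    cos_sub] at key
  apply mul_left_cancel₀ hhalf
  convert key using 1
  · congr 1
    exact sum_congr rfl fun ℓ _ ↦ by ring_nf
  · linear_combination (- cos (m * π / N / 2)) * hsc

theorem sum_range_sin_mul_sin {N a b : ℕ} (ha₀ : 0 < a) (ha : a < N) (hb₀ : 0 < b) (hb : b < N) :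
    ∑ ℓ ∈ range N, sin (a * (ℓ * π / N)) * sin (b * (ℓ * π / N)) =
      if a = b then (N : ℝ) / 2 else 0 := by
  have hN : N ≠ 0 := by omega
  have not_dvd {m : ℤ} (h₀ : m ≠ 0) (h : |m| < 2 * N) : ¬ 2 * (N : ℤ) ∣ m :=
    fun hdvd ↦ h₀ (Int.eq_zero_of_abs_lt_dvd hdvd h)
  have hsum : ∑ ℓ ∈ range N, sin (a * (ℓ * π / N)) * sin (b * (ℓ * π / N)) =
      (∑ ℓ ∈ range N, cos (((a - b : ℤ) : ℝ) * (ℓ * π / N)) -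
        ∑ ℓ ∈ range N, cos (((a + b : ℤ) : ℝ) * (ℓ * π / N))) / 2 := by
    rw [← sum_sub_distrib, sum_div]
    refine sum_congr rfl fun ℓ _ ↦ ?_
    push_cast
    rw [sub_mul, add_mul, cos_sub, cos_add]
    ring
  have hplus := sum_range_cos_int_mul hN (m := a + b)
    (not_dvd (by omega) (abs_lt.mpr ⟨by omega, by omega⟩))
  rw [hsum, hplus]
  split_ifs with hab
  · subst hab
    simp only [sub_self, Int.cast_zero, zero_mul, cos_zero, sum_const, card_range, nsmul_eq_mul,
      mul_one]
    rw [show ((a + a : ℤ) : ℝ) * π / 2 = (a : ℤ) * π by push_cast; ring, sin_int_mul_pi]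
    ring
  · rw [sum_range_cos_int_mul hN (not_dvd (by omega) (abs_lt.mpr ⟨by omega, by omega⟩)),
      show ((a + b : ℤ) : ℝ) * π / 2 = ((a - b : ℤ) : ℝ) * π / 2 + b * π by push_cast; ring,
      sin_add_nat_mul_pi, mul_pow, ← pow_mul, pow_mul']
    simp

theorem tridiagA_mulVec_apply {N : ℕ} {F : ℕ → ℝ} (h₀ : F 0 = 0) (hN : F N = 0)
    (a : Fin (N - 1)) : (tridiagA N *ᵥ fun c ↦ F (c + 1)) a = (F a + F (a + 2)) / 2 := by
  have ha := a.isLt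
  set f : ℕ → ℝ := fun c ↦ (if (a : ℕ) + 1 = c ∨ c + 1 = a then 1 / 2 else 0) * F (c + 1)
  have hf : (tridiagA N *ᵥ fun c ↦ F (c + 1)) a = ∑ c ∈ range (N - 1), f c :=
    Fin.sum_univ_eq_sum_range f (N - 1)
  rw [hf, sum_eq_add ((a : ℕ) + 1) ((a : ℕ) - 1) (by omega)]
  · obtain h | h := Nat.eq_zero_or_pos a
    · simp [f, h, h₀, div_eq_inv_mul]
    · simp only [f, Nat.sub_add_cancel h, true_or, or_true, ↓reduceIte]
      ring
  · intro c _ hc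
    simp only [f, ite_mul, zero_mul, ite_eq_right_iff]
    omega
  · intro h
    simp only [mem_range, not_lt] at h
    simp [f, show (a : ℕ) + 1 + 1 = N by omega, hN]
  · exact fun h ↦ absurd (mem_range.mpr (by omega)) h

-- The `ℓ = 0` term vanishes; summing over `range N` keeps the sums in the shape of
-- `Real.sin_mul_sum_cos`.
noncomputable def spectralKernel (N k x y : ℕ) : ℝ :=
  2 / N * ∑ ℓ ∈ range N, cos (ℓ * π / N) ^ k * sin (x * (ℓ * π / N)) * sin (y * (ℓ * π / N))

theorem spectralKernel_zero_left (N k y : ℕ) : spectralKernel N k 0 y = 0 := by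
  simp [spectralKernel]

theorem spectralKernel_self_left (N k y : ℕ) : spectralKernel N k N y = 0 := by
  obtain rfl | hN := eq_or_ne N 0
  · simp [spectralKernel]
  refine mul_eq_zero_of_right _ (sum_eq_zero fun ℓ _ ↦ ?_)
  rw [show (N : ℝ) * (ℓ * π / N) = ℓ * π by field_simp, sin_nat_mul_pi]
  ring

theorem spectralKernel_pow_zero {N x y : ℕ} (hx₀ : 0 < x) (hx : x < N) (hy₀ : 0 < y)
    (hy : y < N) :
    spectralKernel N 0 x y = if x = y then 1 else 0 := by
  have hN : (N : ℝ) ≠ 0 := Nat.cast_ne_zero.mpr (by omega)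
  simp only [spectralKernel, pow_zero, one_mul]
  rw [sum_range_sin_mul_sin hx₀ hx hy₀ hy]
  split_ifs
  · field_simp
  · simp

theorem spectralKernel_pow_succ (N k x y : ℕ) :
    spectralKernel N (k + 1) (x + 1) y =
      (spectralKernel N k x y + spectralKernel N k (x + 2) y) / 2 := by
  have term (θ : ℝ) : cos θ ^ (k + 1) * sin ((x + 1 : ℕ) * θ) =
      (cos θ ^ k * sin (x * θ) + cos θ ^ k * sin ((x + 2 : ℕ) * θ)) / 2 := by
    have h := sin_add_sin (x * θ) ((x + 2 : ℕ) * θ)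
    rw [show ((x : ℝ) * θ + (x + 2 : ℕ) * θ) / 2 = (x + 1 : ℕ) * θ by push_cast; ring,
      show ((x : ℝ) * θ - (x + 2 : ℕ) * θ) / 2 = -θ by push_cast; ring, cos_neg] at h
    linear_combination (-cos θ ^ k / 2) * h
  simp only [spectralKernel, term, add_mul, sum_add_distrib, div_mul_eq_mul_div, ← sum_div]
  ring

theorem tridiagA_pow_apply (N k : ℕ) (a b : Fin (N - 1)) :
    (tridiagA N ^ k) a b = spectralKernel N k (a + 1) (b + 1) := by
  induction k generalizing a with
  | zero =>
    rw [pow_zero, Matrix.one_apply, spectralKernel_pow_zero (by omega) (by omega) (by omega)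
      (by omega)]
    simp only [Fin.ext_iff, add_left_inj]
  | succ k ih =>
    rw [pow_succ', Matrix.mul_apply]
    change (tridiagA N *ᵥ fun c ↦ (tridiagA N ^ k) c b) a = _
    simp only [ih]
    rw [tridiagA_mulVec_apply (F := fun x ↦ spectralKernel N k x (b + 1))
      (spectralKernel_zero_left N k _) (spectralKernel_self_left N k _), spectralKernel_pow_succ]

theorem spectralKernel_one_sub_one {N : ℕ} (hN : 0 < N) (k : ℕ) :
    spectralKernel N k 1 (N - 1) = 2 / N * ∑ ℓ ∈ Icc 1 (N - 1),
      (-1 : ℝ) ^ (ℓ + 1) * cos (ℓ * π / N) ^ k * sin (ℓ * π / N) ^ 2 := by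
  have hN' : (N : ℝ) ≠ 0 := Nat.cast_ne_zero.mpr hN.ne'
  rw [spectralKernel, sum_range_eq_add_Ico _ hN, ← Ico_add_one_right_eq_Icc,
    Nat.sub_one_add_one hN.ne']
  congr 1
  simp only [Nat.cast_zero, zero_mul, zero_div, mul_zero, sin_zero, zero_add, Nat.cast_one,
    one_mul]
  refine sum_congr rfl fun ℓ _ ↦ ?_
  rw [Nat.cast_sub hN, show ((N : ℝ) - (1 : ℕ)) * (ℓ * π / N) = ℓ * π - ℓ * π / N by
    field_simp; ring, sin_nat_mul_pi_sub]
  ring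

/-- For `N ≥ 2` and every integer `k ≥ 0`, the `(1, N−1)` entry of `A^k`
equals `(2/N)·∑_{ℓ=1}^{N−1} (−1)^{ℓ+1} cos^k(ℓπ/N) sin²(ℓπ/N)`. -/
theorem stmt5 (N : ℕ) (hN : 2 ≤ N) (k : ℕ) :
    (tridiagA N ^ k) ⟨0, by omega⟩ ⟨N - 2, by omega⟩ =
      2 / (N : ℝ) * ∑ ℓ ∈ Finset.Icc 1 (N - 1),
        (-1 : ℝ) ^ (ℓ + 1) * Real.cos (ℓ * Real.pi / N) ^ k *
          Real.sin (ℓ * Real.pi / N) ^ 2 := by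
  rw [tridiagA_pow_apply, ← spectralKernel_one_sub_one (by omega)]
  congr 1
  dsimp only
  omega
end

section
/- Let r, m12, m21 be real numbers with r > 1, 0 < m12 ≤ 1, and 0 < m21 ≤ 1. Then λ₋ ≤ λ₊ < 0; in particular both eigenvalues of M_r are strictly negative. -/
open Matrix

/-- With `L1 = (r−1)(1−m12) + r·m21`, `L2 = (r−1)(1−m21) + r·m12` and
`λ± = −(L1+L2)/2 ± (1/2)√((L1−L2)² + 4·m12·m21)`: if `r > 1`, `0 < m12 ≤ 1` and
`0 < m21 ≤ 1`, then `λ₋ ≤ λ₊ < 0`, i.e. both eigenvalues of `M_r` are strictly negative. -/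
theorem stmt13 (r m12 m21 : ℝ) (hr : 1 < r)
    (h12 : 0 < m12) (h12' : m12 ≤ 1) (h21 : 0 < m21) (h21' : m21 ≤ 1)
    (L1 L2 lamP lamM : ℝ)
    (hL1 : L1 = (r - 1) * (1 - m12) + r * m21)
    (hL2 : L2 = (r - 1) * (1 - m21) + r * m12)
    (hP : lamP = -(L1 + L2) / 2 + Real.sqrt ((L1 - L2) ^ 2 + 4 * m12 * m21) / 2)
    (hM : lamM = -(L1 + L2) / 2 - Real.sqrt ((L1 - L2) ^ 2 + 4 * m12 * m21) / 2) :
    lamM ≤ lamP ∧ lamP < 0 := by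
  have hs : 0 ≤ Real.sqrt ((L1 - L2) ^ 2 + 4 * m12 * m21) := Real.sqrt_nonneg _
  have hL1pos : 0 < L1 := by nlinarith
  have hL2pos : 0 < L2 := by nlinarith
  have hsum : 0 < L1 + L2 := by linarith
  have hlt : Real.sqrt ((L1 - L2) ^ 2 + 4 * m12 * m21) < L1 + L2 := by
    rw [show (L1 + L2) = Real.sqrt ((L1 + L2) ^ 2) by
      rw [Real.sqrt_sq hsum.le]]
    apply Real.sqrt_lt_sqrt (by positivity)
    have hA : r * m21 ≤ L1 := by nlinarith
    have hB : r * m12 ≤ L2 := by nlinarith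
    have key : m12 * m21 < L1 * L2 := by
      have h1 : r * m21 * (r * m12) ≤ L1 * L2 :=
        mul_le_mul hA hB (by positivity) hL1pos.le
      nlinarith [mul_pos (mul_pos (show (0:ℝ) < r * r - 1 by nlinarith) h12) h21]
    nlinarith [key]
  constructor
  · rw [hP, hM]; linarith
  · rw [hP]; linarith
end

section
/- Let G = (V, E) be a finite directed graph and let s, t ∈ V with s ≠ t. If there exists a refillable path from s to t in G, then the set V ∖ {t} is reachable from {s} under the configuration step relation, and Step(V ∖ {t}, V) holds; consequently the full vertex set V is reachable from {s} with penultimate state V ∖ {t}. -/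
/-- The configuration step relation of the Birth–death process on a directed graph with
vertex set `V` and edge relation `E`: `ConfigStep E X X'` holds iff there is a directed
edge `(u, v)` such that exactly one of `u, v` belongs to `X`, and `X' = X ∆ {v}`
(`X` with the membership of `v` flipped). -/
def ConfigStep {V : Type*} (E : V → V → Prop) (X X' : Set V) : Prop :=
  ∃ u v, E u v ∧ ((u ∈ X ∧ v ∉ X) ∨ (u ∉ X ∧ v ∈ X)) ∧ X' = symmDiff X {v}

private lemma cs_add {V : Type*} (E : V → V → Prop) {X : Set V} {a c : V}
    (he : E a c) (ha : a ∈ X) (hc : c ∉ X) : ConfigStep E X (X ∪ {c}) := by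
  refine ⟨a, c, he, Or.inl ⟨ha, hc⟩, ?_⟩
  ext v
  by_cases hv : v = c <;> simp [Set.symmDiff_def, hv, hc]

private lemma cs_remove {V : Type*} (E : V → V → Prop) {X : Set V} {a c : V}
    (he : E a c) (ha : a ∉ X) (hc : c ∈ X) : ConfigStep E X (X \ {c}) := by
  refine ⟨a, c, he, Or.inr ⟨ha, hc⟩, ?_⟩
  ext v
  by_cases hv : v = c <;> simp [Set.symmDiff_def, hv, hc]

private lemma exists_addable {V : Type*} {E : V → V → Prop} {u0 s v : V} {X : Set V}
    (hs : s ∈ X)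
    (h : Relation.ReflTransGen (fun a b => E a b ∧ a ≠ u0 ∧ b ≠ u0) s v) :
    v ∉ X → ∃ c a, c ∉ X ∧ c ≠ u0 ∧ a ∈ X ∧ E a c := by
  induction h with
  | refl => intro hv; exact absurd hs hv
  | @tail b c hsb hbc ih =>
    intro hv
    by_cases hb : b ∈ X
    · exact ⟨c, b, hv, hbc.2.2, hb, hbc.1⟩
    · exact ih hb

private lemma fill {V : Type*} [Fintype V] (E : V → V → Prop) (s t u0 : V)
    (h3 : ∀ v : V, v ≠ t → v ≠ u0 →
      Relation.ReflTransGen (fun a b => E a b ∧ a ≠ u0 ∧ b ≠ u0) s v) :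
    ∀ n (X : Set V), {v | v ∉ X ∧ v ≠ u0}.ncard ≤ n → s ∈ X → u0 ∉ X →
      ∃ X', Relation.ReflTransGen (ConfigStep E) X X' ∧ u0 ∉ X' ∧
        ∀ v, v ≠ t → v ≠ u0 → v ∈ X' := by
  intro n
  induction n with
  | zero =>
    intro X hcard hs hu0
    refine ⟨X, .refl, hu0, fun v hvt hvu0 => ?_⟩
    by_contra hvX
    have hne : {v | v ∉ X ∧ v ≠ u0}.Nonempty := ⟨v, hvX, hvu0⟩
    have := Set.ncard_pos (Set.toFinite _) |>.mpr hne
    omega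
  | succ n ih =>
    intro X hcard hs hu0
    by_cases hdone : ∀ v, v ≠ t → v ≠ u0 → v ∈ X
    · exact ⟨X, .refl, hu0, hdone⟩
    · push_neg at hdone
      obtain ⟨v, hvt, hvu0, hvX⟩ := hdone
      obtain ⟨c, a, hcX, hcu0, haX, hac⟩ := exists_addable hs (h3 v hvt hvu0) hvX
      have hstep := cs_add E hac haX hcX
      have hsub : {w | w ∉ X ∪ {c} ∧ w ≠ u0} ⊂ {w | w ∉ X ∧ w ≠ u0} := by
        constructor
        · intro w hw
          exact ⟨fun h => hw.1 (Or.inl h), hw.2⟩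
        · intro hsub'
          have := hsub' ⟨hcX, hcu0⟩
          exact this.1 (Or.inr rfl)
      have hlt : {w | w ∉ X ∪ {c} ∧ w ≠ u0}.ncard < {w | w ∉ X ∧ w ≠ u0}.ncard :=
        Set.ncard_lt_ncard hsub (Set.toFinite _)
      obtain ⟨X', hrt, hu0', hfull⟩ := ih (X ∪ {c}) (by omega) (Or.inl hs)
        (fun h => by rcases h with h | h; exact hu0 h; exact (by simp at h; exact hcu0 h.symm))
      exact ⟨X', .head hstep hrt, hu0', hfull⟩

/-- Let `G = (V, E)` be a finite directed graph, `s ≠ t` vertices. If there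
is a refillable path `u 0 → u 1 → ⋯ → u k = t` from `s` to `t` (i.e. a directed path with
`k ≥ 1` and distinct vertices such that (1) `u 0 ≠ s`; (2) some vertex `w` outside the path
has an edge `w → u 0`; (3) every `v ∈ V ∖ {t, u 0}` is reachable from `s` by a directed path
avoiding `u 0`), then `V ∖ {t}` is reachable from `{s}` under the configuration step
relation, `Step(V ∖ {t}, V)` holds, and hence `V` is reachable from `{s}` with penultimate
state `V ∖ {t}`. -/
theorem stmt15 {V : Type*} [Fintype V] (E : V → V → Prop) (s t : V) (hst : s ≠ t)
    (k : ℕ) (hk : 1 ≤ k) (u : ℕ → V)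
    (hpath : ∀ i < k, E (u i) (u (i + 1)))
    (hlast : u k = t)
    (hdistinct : ∀ i ≤ k, ∀ j ≤ k, u i = u j → i = j)
    (h1 : u 0 ≠ s)
    (h2 : ∃ w : V, (∀ i ≤ k, w ≠ u i) ∧ E w (u 0))
    (h3 : ∀ v : V, v ≠ t → v ≠ u 0 →
      Relation.ReflTransGen (fun a b => E a b ∧ a ≠ u 0 ∧ b ≠ u 0) s v) :
    Relation.ReflTransGen (ConfigStep E) {s} (Set.univ \ {t}) ∧
    ConfigStep E (Set.univ \ {t}) Set.univ ∧
    Relation.ReflTransGen (ConfigStep E) {s} Set.univ := by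
  obtain ⟨w, hw, hwE⟩ := h2
  have hune : ∀ i ≤ k, ∀ j ≤ k, i ≠ j → u i ≠ u j := by
    intro i hi j hj hij heq
    exact hij (hdistinct i hi j hj heq)
  obtain ⟨X', hrt1, hu0X', hfullX'⟩ :=
    fill E s t (u 0) h3 ({v | v ∉ ({s} : Set V) ∧ v ≠ u 0}.ncard) {s} le_rfl rfl
      (by simpa using h1)
  -- the "A" sets used going down the chain, "B" sets going up
  set A : ℕ → Set V := fun j => {v : V | ∀ i, i < j → v ≠ u i} with hA
  set B : ℕ → Set V := fun j => {v : V | ∀ i, j ≤ i → i ≤ k → v ≠ u i} with hB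
  have hAB : A (k+1) = B 0 := by
    ext v; simp only [hA, hB, Set.mem_setOf_eq]
    constructor
    · intro h i _ hik; exact h i (by omega)
    · intro h i hik; exact h i (by omega) (by omega)
  have hBk : B k = Set.univ \ {t} := by
    ext v; simp only [hB, Set.mem_setOf_eq, Set.mem_diff, Set.mem_univ, Set.mem_singleton_iff,
      true_and]
    constructor
    · intro h hv; exact h k le_rfl le_rfl (hv.trans hlast.symm)
    · intro h i hik hik'; have : i = k := by omega
      subst this; rw [hlast]; exact h
  -- step B 0 → B 1 by adding u 0 via w
  have hwB0 : w ∈ B 0 := by intro i _ hik; exact hw i hik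
  have hu0B0 : u 0 ∉ B 0 := fun h => h 0 le_rfl (by omega) rfl
  have hB01 : B 0 ∪ {u 0} = B 1 := by
    ext v
    simp only [hB, Set.mem_union, Set.mem_setOf_eq, Set.mem_singleton_iff]
    constructor
    · rintro (h | h) i h1i hik
      · exact h i (by omega) hik
      · subst h; exact hune 0 (by omega) i (by omega) (by omega)
    · intro h
      by_cases hv : v = u 0
      · exact Or.inr hv
      · exact Or.inl (fun i _ hik => by
          rcases Nat.eq_zero_or_pos i with h0 | h0
          · subst h0; exact hv
          · exact h i (by omega) hik)
  have stepB01 : ConfigStep E (B 0) (B 1) := by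
    rw [← hB01]; exact cs_add E hwE hwB0 hu0B0
  -- phase 3: B 1 →* B k
  have phase3 : ∀ d, 1 + d ≤ k → Relation.ReflTransGen (ConfigStep E) (B 1) (B (1 + d)) := by
    intro d
    induction d with
    | zero => intro _; exact .refl
    | succ d ih =>
      intro hd
      refine (ih (by omega)).tail ?_
      have he : E (u d) (u (d + 1)) := hpath d (by omega)
      have haB : u d ∈ B (1 + d) := by
        intro i h1i hik
        exact hune d (by omega) i (by omega) (by omega)
      have hcB : u (d + 1) ∉ B (1 + d) := fun h => h (d+1) (by omega) (by omega) rfl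
      have heq : B (1 + d) ∪ {u (d + 1)} = B (1 + (d + 1)) := by
        ext v
        simp only [hB, Set.mem_union, Set.mem_setOf_eq, Set.mem_singleton_iff]
        constructor
        · rintro (h | h) i h1i hik
          · exact h i (by omega) hik
          · subst h; exact hune (d+1) (by omega) i (by omega) (by omega)
        · intro h
          by_cases hv : v = u (d + 1)
          · exact Or.inr hv
          · exact Or.inl (fun i h1i hik => by
              rcases Nat.lt_or_ge i (d+2) with h0 | h0
              · have : i = d + 1 := by omega
                subst this; exact hv
              · exact h i (by omega) hik)
      rw [← heq]
      exact cs_add E he haB hcB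
  -- phase 2: A 1 →* A (k+1)
  have phase2 : ∀ j, j ≤ k → Relation.ReflTransGen (ConfigStep E) (A 1) (A (j + 1)) := by
    intro j
    induction j with
    | zero => intro _; exact .refl
    | succ j ih =>
      intro hj
      refine (ih (by omega)).tail ?_
      have he : E (u j) (u (j + 1)) := hpath j (by omega)
      have haA : u j ∉ A (j + 1) := fun h => h j (by omega) rfl
      have hcA : u (j + 1) ∈ A (j + 1) := by
        intro i hi
        exact hune (j+1) (by omega) i (by omega) (by omega)
      have heq : A (j + 1) \ {u (j + 1)} = A (j + 1 + 1) := by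
        ext v
        simp only [hA, Set.mem_diff, Set.mem_setOf_eq, Set.mem_singleton_iff]
        constructor
        · rintro ⟨h, hv⟩ i hi
          rcases Nat.lt_or_ge i (j+1) with h0 | h0
          · exact h i h0
          · have : i = j + 1 := by omega
            subst this; exact hv
        · intro h
          exact ⟨fun i hi => h i (by omega), h (j+1) (by omega)⟩
      rw [← heq]
      exact cs_remove E he haA hcA
  -- main combination
  have main : Relation.ReflTransGen (ConfigStep E) {s} (Set.univ \ {t}) := by
    by_cases ht : t ∈ X'
    · -- X' = A 1
      have hXA : X' = A 1 := by
        ext v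
        simp only [hA, Set.mem_setOf_eq]
        constructor
        · intro hv i hi heq
          have : i = 0 := by omega
          subst this; rw [← heq] at hu0X'; exact hu0X' hv
        · intro hv
          by_cases hvt : v = t
          · subst hvt; exact ht
          · exact hfullX' v hvt (hv 0 (by omega))
      have c1 : Relation.ReflTransGen (ConfigStep E) {s} (A 1) := by rw [← hXA]; exact hrt1
      have c2 := phase2 k le_rfl
      rw [hAB] at c2
      have c3 := phase3 (k - 1) (by omega)
      have hk1 : 1 + (k - 1) = k := by omega
      rw [hk1, hBk] at c3
      exact c1.trans (c2.trans ((Relation.ReflTransGen.single stepB01).trans c3))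
    · -- t ∉ X': add u 0 directly
      have hwX' : w ∈ X' := hfullX' w (by rw [← hlast]; exact hw k le_rfl) (hw 0 (by omega))
      have heq : X' ∪ {u 0} = Set.univ \ {t} := by
        ext v
        simp only [Set.mem_union, Set.mem_singleton_iff, Set.mem_diff, Set.mem_univ, true_and]
        constructor
        · rintro (h | h)
          · intro hvt; subst hvt; exact ht h
          · subst h; rw [← hlast]; exact hune 0 (by omega) k (by omega) (by omega)
        · intro h
          by_cases hv : v = u 0
          · exact Or.inr hv
          · exact Or.inl (hfullX' v h hv)
      refine hrt1.tail ?_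
      rw [← heq]
      exact cs_add E hwE hwX' hu0X'
  have laststep : ConfigStep E (Set.univ \ {t}) Set.univ := by
    have he : E (u (k - 1)) (u k) := by
      have := hpath (k - 1) (by omega)
      have h' : k - 1 + 1 = k := by omega
      rwa [h'] at this
    have ha : u (k - 1) ∈ Set.univ \ {t} := by
      refine ⟨Set.mem_univ _, ?_⟩
      simp only [Set.mem_singleton_iff]
      rw [← hlast]
      exact hune (k-1) (by omega) k le_rfl (by omega)
    have hc : t ∉ Set.univ \ {t} := fun h => h.2 rfl
    have heq : (Set.univ \ {t} : Set V) ∪ {t} = Set.univ := by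
      ext v
      by_cases hv : v = t <;> simp [hv]
    have := cs_add E (by rwa [hlast] at he) ha hc
    rwa [heq] at this
  exact ⟨main, laststep, main.tail laststep⟩
end

section
/- Let G = (V, E) be a finite directed graph, s ∈ V, and v ∈ V with v ≠ s. If there is no directed walk from s to v in G, then every subset X ⊆ V reachable from {s} under the configuration step relation satisfies v ∉ X; in particular, the full vertex set V is not reachable from {s}. -/
lemma configStep_invariant {V : Type*} (E : V → V → Prop) (s : V) (X : Set V)
    (h : Relation.ReflTransGen (ConfigStep E) {s} X) :
    X ⊆ {w | Relation.ReflTransGen E s w} := by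
  induction h with
  | refl => intro w hw; simp only [Set.mem_singleton_iff] at hw; subst hw; exact .refl
  | tail _ hstep ih =>
    obtain ⟨u, z, huz, hcase, rfl⟩ := hstep
    intro w hw
    rw [Set.mem_symmDiff] at hw
    rcases hw with ⟨hwX, _⟩ | ⟨hwz, hwX⟩
    · exact ih hwX
    · simp only [Set.mem_singleton_iff] at hwz; subst hwz
      rcases hcase with ⟨hu, _⟩ | ⟨_, hz⟩
      · exact (ih hu).tail huz
      · exact absurd hz hwX

/-- Let `G = (V, E)` be a finite directed graph, `s, v ∈ V`, `v ≠ s`.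
If there is no directed walk from `s` to `v` in `G`, then every `X ⊆ V` reachable from
`{s}` under the configuration step relation satisfies `v ∉ X`; in particular the full
vertex set is not reachable from `{s}`. -/
theorem stmt17 {V : Type*} [Fintype V] (E : V → V → Prop) (s v : V) (hvs : v ≠ s)
    (hwalk : ¬ Relation.ReflTransGen E s v) :
    (∀ X : Set V, Relation.ReflTransGen (ConfigStep E) {s} X → v ∉ X) ∧
    ¬ Relation.ReflTransGen (ConfigStep E) {s} Set.univ := by
  have key : ∀ X : Set V, Relation.ReflTransGen (ConfigStep E) {s} X → v ∉ X := by
    intro X hX hv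
    exact hwalk (configStep_invariant E s X hX hv)
  exact ⟨key, fun h => key _ h (Set.mem_univ v)⟩
end
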